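/- For a ∈ {0,1} and every b ∈ ℚ₂, the integral of ψ(b·x₁x₂) over the translated set (1/2,1/2) + M_a = {(x₁,x₂) ∈ ℚ₂² : ‖x₁ − 1/2‖ ≤ 1, ‖x₂ − 1/2‖ ≤ 1, ‖x₁ + x₂ − 1 − a‖ ≤ 1/2} with respect to μ×μ equals (1/2)·ψ(((1+2a)/4)·b) if ‖b‖ ≤ 1, and equals 0 if ‖b‖ > 1. (This is the computation of J̃_a(b) in the proof of Lemma 5.5(3), which shows the corresponding Whittaker function is the constant (1/2)γ(W) supported on t ∈ (1+2a)/4 + ℤ₂.) -/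

import Mathlib

open MeasureTheory

/-- The translated set `(1/2,1/2) + M_a` from the proof of Lemma 5.5(3). -/
def MsetShift (a : ℕ) : Set (ℚ_[2] × ℚ_[2]) :=
  {p | ‖p.1 - 2⁻¹‖ ≤ 1 ∧ ‖p.2 - 2⁻¹‖ ≤ 1 ∧ ‖p.1 + p.2 - 1 - (a : ℚ_[2])‖ ≤ 1 / 2}

/-!
Integrate first in `x₂`. For fixed `x₁` with `‖x₁ - 1/2‖ ≤ 1`, so that `‖x₁‖ = 2`, the variable
`x₂` ranges over the ball of radius `1/2` about `1 + a - x₁`, which has measure `1/2` because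
`ℤ₂` is the disjoint union of two such balls. If `‖b‖ ≤ 1`, the identity
`x₁ x₂ - (1 + 2a)/4 = x₁ (x₂ - (1 + a - x₁)) - (x₁ - 1/2)(x₁ - 1/2 - a)` shows that
`ψ (b x₁ x₂) = ψ ((1 + 2a) b / 4)` on that ball. If `‖b‖ > 1`, then `‖b x₁‖ ≥ 4`, and the
translation `x₂ ↦ x₂ + (2 b x₁)⁻¹` preserves the ball and multiplies the integrand by
`ψ (1/2) = -1`, so the inner integral vanishes.
-/

open Metric IsUltrametricDist

lemma IsUltrametricDist.norm_sub_le_max {E : Type*} [SeminormedAddCommGroup E]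
    [IsUltrametricDist E] (x y : E) : ‖x - y‖ ≤ max ‖x‖ ‖y‖ := by
  simpa [sub_eq_add_neg] using norm_add_le_max x (-y)

namespace Padic

lemma norm_inv_two : ‖(2⁻¹ : ℚ_[2])‖ = 2 := by
  simpa using congrArg (·⁻¹) (norm_p (p := 2))

lemma norm_eq_two_of_mem_closedBall {x : ℚ_[2]} (hx : x ∈ closedBall 2⁻¹ 1) : ‖x‖ = 2 := by
  rw [mem_closedBall_iff_norm] at hx
  have h := norm_add_eq_max_of_norm_ne_norm (x := x - 2⁻¹) (y := 2⁻¹)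
    (by rw [norm_inv_two]; linarith)
  rwa [sub_add_cancel, norm_inv_two, max_eq_right (by linarith)] at h

variable {p : ℕ} [hp : Fact p.Prime]

lemma le_norm_of_one_lt_norm {x : ℚ_[p]} (hx : 1 < ‖x‖) : (p : ℝ) ≤ ‖x‖ := by
  simpa using (norm_le_pow_iff_norm_lt_pow_add_one x 0).not.mp hx.not_ge

lemma norm_le_inv_of_norm_lt_one {x : ℚ_[p]} (hx : ‖x‖ < 1) : ‖x‖ ≤ (p : ℝ)⁻¹ := by
  simpa using (norm_le_pow_iff_norm_lt_pow_add_one x (-1)).mpr (by simpa using hx)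

lemma closedBall_zero_one_eq_biUnion :
    closedBall (0 : ℚ_[p]) 1 = ⋃ n ∈ Finset.range p, closedBall (n : ℚ_[p]) (p : ℝ)⁻¹ := by
  ext x
  simp only [mem_closedBall, dist_eq_norm, sub_zero, Set.mem_iUnion, Finset.mem_range,
    exists_prop]
  constructor
  · intro hx
    obtain ⟨n, hn, hxn⟩ := PadicInt.exists_mem_range (⟨x, hx⟩ : ℤ_[p])
    rw [IsLocalRing.mem_maximalIdeal, PadicInt.mem_nonunits] at hxn
    exact ⟨n, hn, norm_le_inv_of_norm_lt_one (x := x - (n : ℚ_[p])) hxn⟩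
  · rintro ⟨n, -, hxn⟩
    calc ‖x‖ = ‖(x - n) + n‖ := by rw [sub_add_cancel]
      _ ≤ max ‖x - n‖ ‖(n : ℚ_[p])‖ := norm_add_le_max _ _
      _ ≤ 1 := max_le (hxn.trans (inv_le_one_of_one_le₀ (mod_cast hp.out.one_le)))
          (norm_natCast_le_one _ n)

lemma pairwiseDisjoint_closedBall_natCast :
    (Finset.range p : Set ℕ).PairwiseDisjoint fun n => closedBall (n : ℚ_[p]) (p : ℝ)⁻¹ := by
  intro n hn m hm hnm
  refine (closedBall_eq_or_disjoint _ _ _).resolve_left fun heq => hnm ?_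
  have hm_mem : (m : ℚ_[p]) ∈ closedBall (n : ℚ_[p]) (p : ℝ)⁻¹ := heq ▸ mem_closedBall_self
    (inv_nonneg.mpr p.cast_nonneg)
  rw [mem_closedBall, dist_eq_norm] at hm_mem
  have hdvd : (p : ℤ) ∣ (m : ℤ) - n := by
    rw [← norm_intCast_lt_one_iff]
    push_cast
    exact hm_mem.trans_lt (inv_lt_one_of_one_lt₀ (mod_cast hp.out.one_lt))
  exact (Nat.modEq_iff_dvd.mpr hdvd).eq_of_lt_of_lt (Finset.mem_range.mp hn)
    (Finset.mem_range.mp hm)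

variable [MeasurableSpace ℚ_[p]] [BorelSpace ℚ_[p]] (μ : Measure ℚ_[p]) [μ.IsAddHaarMeasure]

lemma addHaar_closedBall_inv_p (c : ℚ_[p]) :
    μ (closedBall c (p : ℝ)⁻¹) = (p : ENNReal)⁻¹ * μ (closedBall 0 1) := by
  have hsum : μ (closedBall 0 1) = p * μ (closedBall (0 : ℚ_[p]) (p : ℝ)⁻¹) := by
    rw [closedBall_zero_one_eq_biUnion, measure_biUnion_finset pairwiseDisjoint_closedBall_natCast
      fun _ _ => measurableSet_closedBall]
    simp [Measure.addHaar_closedBall_center μ _ (p : ℝ)⁻¹]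
  rw [hsum, ← mul_assoc, ENNReal.inv_mul_cancel (mod_cast hp.out.ne_zero)
    (ENNReal.natCast_ne_top p), one_mul, Measure.addHaar_closedBall_center]

end Padic

section

variable {E : Type*} [NormedAddCommGroup E] [IsUltrametricDist E] [MeasurableSpace E]
  [BorelSpace E] (μ : Measure E) [μ.IsAddRightInvariant]

lemma setIntegral_closedBall_eq_zero_of_map_add {χ : E → ℂ}
    (hχ : ∀ x y, χ (x + y) = χ x * χ y) {c t : E} {r : ℝ} (ht : ‖t‖ ≤ r) (hχt : χ t ≠ 1) :
    ∫ x in closedBall c r, χ x ∂μ = 0 := by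
  have hpre : (· + t) ⁻¹' closedBall c r = closedBall c r := by
    rw [preimage_add_right_closedBall]
    exact (closedBall_eq_of_mem (by simpa [dist_eq_norm] using ht)).symm
  have htrans : ∫ x in closedBall c r, χ x ∂μ = (∫ x in closedBall c r, χ x ∂μ) * χ t := by
    calc ∫ x in closedBall c r, χ x ∂μ = ∫ x in (· + t) ⁻¹' closedBall c r, χ (x + t) ∂μ :=
          ((measurePreserving_add_right μ t).setIntegral_preimage_emb
            (measurableEmbedding_addRight t) χ _).symm
      _ = _ := by simp_rw [hpre, hχ, integral_mul_const]
  have : (∫ x in closedBall c r, χ x ∂μ) * (1 - χ t) = 0 := by linear_combination htrans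
  exact (mul_eq_zero.mp this).resolve_right (sub_ne_zero.mpr hχt.symm)

end

section

variable {α β E : Type*} [MeasurableSpace α] [MeasurableSpace β] [NormedAddCommGroup E]
  [NormedSpace ℝ E] {μ : Measure α} {ν : Measure β} [SFinite μ] [SFinite ν]

lemma setIntegral_prod_setOf_fibres {A : Set α} {B : α → Set β} {f : α × β → E}
    (hA : MeasurableSet A) (hB : ∀ x, MeasurableSet (B x))
    (hs : MeasurableSet {p : α × β | p.1 ∈ A ∧ p.2 ∈ B p.1})
    (hf : IntegrableOn f {p : α × β | p.1 ∈ A ∧ p.2 ∈ B p.1} (μ.prod ν)) :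
    ∫ p in {p : α × β | p.1 ∈ A ∧ p.2 ∈ B p.1}, f p ∂μ.prod ν
      = ∫ x in A, ∫ y in B x, f (x, y) ∂ν ∂μ := by
  rw [← integral_indicator hs, integral_prod _ (hf.integrable_indicator hs),
    ← integral_indicator hA]
  congr 1 with x
  by_cases hx : x ∈ A
  · rw [Set.indicator_of_mem hx, ← integral_indicator (hB x)]
    congr 1 with y
    by_cases hy : y ∈ B x <;> simp [hx, hy]
  · simp [Set.indicator, hx]

end

lemma MsetShift_eq_fibres (a : ℕ) :
    MsetShift a = {p | p.1 ∈ closedBall 2⁻¹ 1 ∧ p.2 ∈ closedBall (1 + (a : ℚ_[2]) - p.1) 2⁻¹} := by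
  ext ⟨x, y⟩
  have hfibre : y - (1 + (a : ℚ_[2]) - x) = x + y - 1 - a := by ring
  simp only [MsetShift, Set.mem_ofPred_eq, mem_closedBall_iff_norm, hfibre, one_div]
  refine ⟨fun ⟨hx, _, hxy⟩ => ⟨hx, hxy⟩, fun ⟨hx, hxy⟩ => ⟨hx, ?_, hxy⟩⟩
  calc ‖y - 2⁻¹‖ = ‖(x + y - 1 - a) - (x - 2⁻¹) + a‖ := by ring_nf
    _ ≤ max (max ‖x + y - 1 - a‖ ‖x - 2⁻¹‖) ‖(a : ℚ_[2])‖ :=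
      (norm_add_le_max _ _).trans (max_le_max_right _ (norm_sub_le_max _ _))
    _ ≤ 1 := max_le (max_le (hxy.trans (by norm_num)) hx) (norm_natCast_le_one _ a)

lemma isCompact_MsetShift (a : ℕ) : IsCompact (MsetShift a) := by
  refine (isCompact_closedBall ((2⁻¹, 2⁻¹) : ℚ_[2] × ℚ_[2]) 1).of_isClosed_subset ?_ ?_
  · simp only [MsetShift, Set.ofPred_and]
    refine .inter (isClosed_le ?_ continuous_const)
      (.inter (isClosed_le ?_ continuous_const) (isClosed_le ?_ continuous_const)) <;> fun_prop
  · rintro ⟨x, y⟩ ⟨hx, hy, -⟩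
    simpa [mem_closedBall, Prod.dist_eq, dist_eq_norm] using ⟨hx, hy⟩

lemma norm_mul_sub_le_one_of_mem_fibre {x y : ℚ_[2]} (a : ℕ) (hx : x ∈ closedBall 2⁻¹ 1)
    (hy : y ∈ closedBall (1 + (a : ℚ_[2]) - x) 2⁻¹) : ‖x * y - (1 + 2 * a) / 4‖ ≤ 1 := by
  have hx2 := Padic.norm_eq_two_of_mem_closedBall hx
  rw [mem_closedBall_iff_norm] at hx hy
  have hxa : ‖x - 2⁻¹ - a‖ ≤ 1 :=
    (norm_sub_le_max _ _).trans (max_le hx (norm_natCast_le_one _ a))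
  calc ‖x * y - (1 + 2 * a) / 4‖
        = ‖x * (y - (1 + a - x)) - (x - 2⁻¹) * (x - 2⁻¹ - a)‖ := by ring_nf
    _ ≤ max (‖x‖ * ‖y - (1 + a - x)‖) (‖x - 2⁻¹‖ * ‖x - 2⁻¹ - a‖) := by
      simpa only [norm_mul] using norm_sub_le_max (x * (y - (1 + a - x)))
        ((x - 2⁻¹) * (x - 2⁻¹ - a))
    _ ≤ 1 := by
      rw [hx2]
      exact max_le (by linarith) (mul_le_one₀ hx (norm_nonneg _) hxa)

section

variable [MeasurableSpace ℚ_[2]] [BorelSpace ℚ_[2]] (μ : Measure ℚ_[2]) [μ.IsAddHaarMeasure]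
  {ψ : ℚ_[2] → ℂ} {b x : ℚ_[2]}

lemma setIntegral_fibre_of_norm_le_one (hψadd : ∀ x y : ℚ_[2], ψ (x + y) = ψ x * ψ y)
    (hμ : μ (closedBall 0 1) = 1) (hψtriv : ∀ x : ℚ_[2], ‖x‖ ≤ 1 → ψ x = 1) (a : ℕ) (hb : ‖b‖ ≤ 1)
    (hx : x ∈ closedBall 2⁻¹ 1) :
    ∫ y in closedBall (1 + (a : ℚ_[2]) - x) 2⁻¹, ψ (b * x * y) ∂μ
      = (1 / 2 : ℂ) * ψ ((1 + 2 * (a : ℚ_[2])) / 4 * b) := by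
  have hconst : ∀ y ∈ closedBall (1 + (a : ℚ_[2]) - x) 2⁻¹,
      ψ (b * x * y) = ψ ((1 + 2 * (a : ℚ_[2])) / 4 * b) := fun y hy => by
    have hsmall : ‖b * (x * y - (1 + 2 * a) / 4)‖ ≤ 1 := by
      rw [norm_mul]
      exact mul_le_one₀ hb (norm_nonneg _) (norm_mul_sub_le_one_of_mem_fibre a hx hy)
    rw [show b * x * y = (1 + 2 * a) / 4 * b + b * (x * y - (1 + 2 * a) / 4) by ring,
      hψadd, hψtriv _ hsmall, mul_one]
  have hball : μ (closedBall (1 + (a : ℚ_[2]) - x) 2⁻¹) = 2⁻¹ := by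
    simpa [hμ] using Padic.addHaar_closedBall_inv_p (p := 2) μ (1 + a - x)
  rw [setIntegral_congr_fun measurableSet_closedBall hconst, setIntegral_const, measureReal_def,
    hball, Complex.real_smul]
  norm_num

lemma setIntegral_fibre_of_one_lt_norm (hψadd : ∀ x y : ℚ_[2], ψ (x + y) = ψ x * ψ y)
    (hψhalf : ψ (2⁻¹ : ℚ_[2]) = -1) (hb : 1 < ‖b‖)
    (hx : x ∈ closedBall 2⁻¹ 1) (c : ℚ_[2]) :
    ∫ y in closedBall c 2⁻¹, ψ (b * x * y) ∂μ = 0 := by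
  have hbx : 4 ≤ ‖b * x‖ := by
    rw [norm_mul, Padic.norm_eq_two_of_mem_closedBall hx]
    have hb2 : (2 : ℝ) ≤ ‖b‖ := mod_cast Padic.le_norm_of_one_lt_norm hb
    linarith
  have hbx0 : b * x ≠ 0 := norm_pos_iff.mp (by linarith)
  refine setIntegral_closedBall_eq_zero_of_map_add μ (t := (b * x)⁻¹ * 2⁻¹)
    (fun y z => by rw [mul_add, hψadd]) ?_ ?_
  · rw [norm_mul, norm_inv, Padic.norm_inv_two, ← le_div_iff₀ two_pos, inv_le_comm₀ (by linarith) (by norm_num)]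
    linarith
  · rw [mul_inv_cancel_left₀ hbx0, hψhalf]
    norm_num

end

theorem stmt12_general [MeasurableSpace ℚ_[2]] [BorelSpace ℚ_[2]]
    (μ : Measure ℚ_[2]) [μ.IsAddHaarMeasure]
    (hμ : μ {x : ℚ_[2] | ‖x‖ ≤ 1} = 1)
    (ψ : ℚ_[2] → ℂ) (hψcont : Continuous ψ)
    (hψadd : ∀ x y : ℚ_[2], ψ (x + y) = ψ x * ψ y)
    (hψtriv : ∀ x : ℚ_[2], ‖x‖ ≤ 1 → ψ x = 1)
    (hψhalf : ψ (2⁻¹ : ℚ_[2]) = -1)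
    (a : ℕ) (b : ℚ_[2]) :
    (∫ p in MsetShift a, ψ (b * p.1 * p.2) ∂(μ.prod μ))
      = if ‖b‖ ≤ 1 then (1 / 2 : ℂ) * ψ (((1 + 2 * (a : ℚ_[2])) / 4) * b) else 0 := by
  have hμ' : μ (closedBall 0 1) = 1 := by simpa [closedBall, dist_eq_norm] using hμ
  have hint : IntegrableOn (fun p => ψ (b * p.1 * p.2)) (MsetShift a) (μ.prod μ) :=
    (hψcont.comp (by fun_prop)).continuousOn.integrableOn_compact (isCompact_MsetShift a)
  have hmeas := (isCompact_MsetShift a).isClosed.measurableSet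
  rw [MsetShift_eq_fibres] at hint hmeas ⊢
  rw [setIntegral_prod_setOf_fibres measurableSet_closedBall (fun _ => measurableSet_closedBall)
    hmeas hint]
  split_ifs with hb
  · rw [setIntegral_congr_fun measurableSet_closedBall fun x hx =>
      setIntegral_fibre_of_norm_le_one μ hψadd hμ' hψtriv a hb hx, setIntegral_const,
      measureReal_def, Measure.addHaar_closedBall_center, hμ']
    simp
  · rw [setIntegral_congr_fun measurableSet_closedBall fun x hx =>
      setIntegral_fibre_of_one_lt_norm μ hψadd hψhalf (not_le.mp hb) hx _, integral_zero]

/-- **Paper, proof of Lemma 5.5(3):** the formula for `J̃_a(b)`: for `a ∈ {0,1}`,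
`∫_{(1/2,1/2)+M_a} ψ(b x₁ x₂) d(μ×μ)` equals `(1/2)ψ(((1+2a)/4)b)` when `‖b‖ ≤ 1`
and `0` when `‖b‖ > 1`. -/
theorem stmt12 [MeasurableSpace ℚ_[2]] [BorelSpace ℚ_[2]]
    (μ : Measure ℚ_[2]) [μ.IsAddHaarMeasure] [SigmaFinite μ]
    (hμ : μ {x : ℚ_[2] | ‖x‖ ≤ 1} = 1)
    (ψ : ℚ_[2] → ℂ) (hψcont : Continuous ψ)
    (hψadd : ∀ x y : ℚ_[2], ψ (x + y) = ψ x * ψ y)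
    (hψtriv : ∀ x : ℚ_[2], ‖x‖ ≤ 1 → ψ x = 1)
    (hψhalf : ψ (2⁻¹ : ℚ_[2]) = -1)
    (a : ℕ) (ha : a = 0 ∨ a = 1) (b : ℚ_[2]) :
    (∫ p in MsetShift a, ψ (b * p.1 * p.2) ∂(μ.prod μ))
      = if ‖b‖ ≤ 1 then (1 / 2 : ℂ) * ψ (((1 + 2 * (a : ℚ_[2])) / 4) * b) else 0 :=
  stmt12_general μ hμ ψ hψcont hψadd hψtriv hψhalf a b
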